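/- Let x ∈ 𝐊, B ∈ ℬ_x, and let Y₁, Y₂ be fronts of B with Y₂ above Y₁ (every element of Y₂ is ≥_{M_x} some element of Y₁). Let h : Y₂ → Y₁ be the projection, i.e. h(ν₂) = ν₁ iff ν₁ ∈ Y₁, ν₂ ∈ Y₂ and ν₁ ≤_{M_x} ν₂. Then D^x_{Y₁} = {A ⊆ Y₁ : h⁻¹[A] ∈ D^x_{Y₂}}; thus h witnesses D^x_{Y₁} ≤_RK D^x_{Y₂}. -/

import Mathlib

open Set Cardinal

universe u

variable {α : Type u}

section OrderDefs

variable [PartialOrder α]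

/-- `η` and `ν` are compatible in `M`: they have a common `≤`-upper bound in `M`. -/
def Compat (M : Set α) (η ν : α) : Prop :=
  ∃ ρ ∈ M, η ≤ ρ ∧ ν ≤ ρ

/-- The set of immediate successors of `ν` inside `B`. -/
def succIn (B : Set α) (ν : α) : Set α :=
  {ρ ∈ B | ν < ρ ∧ ¬∃ σ ∈ B, ν < σ ∧ σ < ρ}

/-- The set of maximal elements of `B`. -/
def maxIn (B : Set α) : Set α :=
  {η ∈ B | ∀ ν ∈ B, ¬η < ν}

/-- `r` is the root (least element) of `B`. -/
def IsRoot (B : Set α) (r : α) : Prop :=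
  r ∈ B ∧ ∀ x ∈ B, r ≤ x

/-- `B` is a countable well-founded subtree of `M`. -/
def CWT (M B : Set α) : Prop :=
  B ⊆ M ∧ B.Countable ∧ (∃ r, IsRoot B r) ∧
  (∀ ν ∈ B, ∀ η ∈ B, ∀ ρ ∈ B, η ≤ ν → ρ ≤ ν → η ≤ ρ ∨ ρ ≤ η) ∧
  (∀ C, C ⊆ B → IsChain (· ≤ ·) C → C.Finite) ∧
  (∀ ν ∈ B, succIn B ν = ∅ ∨ (succIn B ν).Infinite) ∧
  (∀ η ∈ B, ∀ ν ∈ B, ¬η ≤ ν → ¬ν ≤ η → ¬Compat M η ν) ∧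
  (∀ ν ∈ B \ maxIn B, ∀ F : Finset α, (F : Set α) ⊆ M \ {ρ | ρ ≤ ν} →
    {ϱ ∈ succIn B ν | ∀ ρ ∈ F, ¬Compat M ρ ϱ}.Infinite)

/-- `Y` is a front of `B`: a maximal set of pairwise incomparable members of `B`. -/
def IsFront (B Y : Set α) : Prop :=
  Y ⊆ B ∧ (∀ η ∈ Y, ∀ ν ∈ Y, η ≠ ν → ¬η ≤ ν) ∧
  (∀ ν ∈ B, ∃ η ∈ Y, η ≤ ν ∨ ν ≤ η)

/-- `B'` is an exhaustive subtree of `B`. -/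
def sb (M B B' : Set α) : Prop :=
  CWT M B' ∧ B' ⊆ B ∧ (∃ r, IsRoot B r ∧ IsRoot B' r) ∧
  ∀ ν ∈ B', succIn B' ν ⊆ succIn B ν ∧ (succIn B ν \ succIn B' ν).Finite

/-- `B'` is a positive subtree of `B`. -/
def psb (M B B' : Set α) : Prop :=
  CWT M B' ∧ B' ⊆ B ∧ (∃ r, IsRoot B r ∧ IsRoot B' r) ∧
  ∀ ν ∈ B' \ maxIn B, (succIn B' ν).Infinite ∧ succIn B' ν ⊆ succIn B ν

/-- `Y` is an almost front of `B`: an antichain of `M` whose intersection with some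
exhaustive subtree `B'` of `B` is a front of `B'`. -/
def IsAlmostFront (M B Y : Set α) : Prop :=
  Y ⊆ M ∧ (∀ η ∈ Y, ∀ ν ∈ Y, η ≠ ν → ¬η ≤ ν) ∧
  ∃ B', sb M B B' ∧ IsFront B' (Y ∩ B')

/-- The relation `B₁ ≤*_M B₂`. -/
def leStar (M B₁ B₂ : Set α) : Prop :=
  CWT M B₁ ∧ CWT M B₂ ∧ (∃ r, IsRoot B₁ r ∧ IsRoot B₂ r) ∧
  ∃ B₂', sb M B₂ B₂' ∧ psb M B₁ (B₂' ∩ B₁) ∧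
    ∀ Y, IsAlmostFront M (B₂' ∩ B₁) Y → IsAlmostFront M B₂ Y

end OrderDefs

section KDefs

variable (α) [PartialOrder α]

/-- A member of the class `𝐊`: a system of approximations to a system of ultrafilters. -/
structure KSys where
  /-- the underlying set of the partial order `M_x` (the order is inherited from `α`) -/
  M : Set α
  /-- the root, i.e. the least element, of `M_x` -/
  rt : α
  rt_mem : rt ∈ M
  rt_least : ∀ a ∈ M, rt ≤ a
  /-- the system `⟨𝒜^x_η : η ∈ M_x⟩` -/
  A : α → Set (Set α)
  A_empty : ∀ η, η ∉ M → A η = ∅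
  A_cwt : ∀ η ∈ M, ∀ B ∈ A η, CWT M B
  A_root : ∀ η ∈ M, ∀ B ∈ A η, IsRoot B η
  A_singleton : ∀ η ∈ M, {η} ∈ A η
  /-- the partial order `≤_x` on `ℬ_x = 𝒜^x_{rt} \ {{rt}}` -/
  lex : Set α → Set α → Prop
  lex_mem : ∀ B₁ B₂, lex B₁ B₂ →
    B₁ ∈ A rt \ {({rt} : Set α)} ∧ B₂ ∈ A rt \ {({rt} : Set α)}
  lex_refl : ∀ B ∈ A rt \ {({rt} : Set α)}, lex B B
  lex_trans : ∀ B₁ B₂ B₃, lex B₁ B₂ → lex B₂ B₃ → lex B₁ B₃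
  lex_antisymm : ∀ B₁ B₂, lex B₁ B₂ → lex B₂ B₁ → B₁ = B₂
  lex_directed : ∀ B₁ ∈ A rt \ {({rt} : Set α)}, ∀ B₂ ∈ A rt \ {({rt} : Set α)},
    ∃ B₃ ∈ A rt \ {({rt} : Set α)}, lex B₁ B₃ ∧ lex B₂ B₃
  lex_leStar : ∀ B₁ B₂, lex B₁ B₂ → leStar M B₁ B₂
  A_restrict : ∀ η ∈ M, ∀ B ∈ A η, ∀ ν ∈ B, B ∩ {ρ | ν ≤ ρ} ∈ A ν

variable {α}

namespace KSys

/-- `ℬ_x = 𝒜^x_{rt_x} \ {{rt_x}}`. -/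
def Bf (x : KSys α) : Set (Set α) :=
  x.A x.rt \ {({x.rt} : Set α)}

/-- The filter `D^x_Y` on an almost front `Y`. -/
def D (x : KSys α) (Y : Set α) : Set (Set α) :=
  {Z | Z ⊆ Y ∧ ∃ B ∈ x.Bf, ∃ B', sb x.M B B' ∧ IsAlmostFront x.M B Y ∧ B' ∩ Y ⊆ Z}

/-- The ideal `id_x(ν,B)` on `suc_B(ν)`. -/
def idl (x : KSys α) (ν : α) (B : Set α) : Set (Set α) :=
  {C | C ⊆ succIn B ν ∧ ∃ F : Finset α, (F : Set α) ⊆ x.M \ {ρ | ν ≤ ρ} ∧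
    ∀ ϱ ∈ C, ∃ ρ ∈ F, Compat x.M ϱ ρ}

/-- `‖x‖ = |M_x| + Σ {|𝒜^x_η| : η ∈ M_x}`. -/
noncomputable def norm (x : KSys α) : Cardinal.{u} :=
  Cardinal.mk ↥x.M + Cardinal.sum fun η : ↥x.M => Cardinal.mk ↥(x.A ↑η)

end KSys

/-- The relation `x ≤_𝐊 y`. -/
def KLE (x y : KSys α) : Prop :=
  x.M ⊆ y.M ∧
  (∀ η ∈ x.M, ∀ ν ∈ x.M, (Compat x.M η ν ↔ Compat y.M η ν)) ∧
  (∀ η ∈ x.M, x.A η ⊆ y.A η) ∧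
  y.rt = x.rt ∧
  (∀ B₁ ∈ x.Bf, ∀ B₂ ∈ x.Bf, (x.lex B₁ B₂ ↔ y.lex B₁ B₂))

end KDefs

/-
Since `B` is a tree, the projection `h` sends each `ν ∈ Y₂` to the unique element of `Y₁`
comparable with it. Both inclusions are therefore instances of one transfer principle: if
`W ∈ D^x_Y` and `Z ⊆ Y'` contains every element of the front `Y'` comparable with a member of
`W`, then `Z ∈ D^x_{Y'}`. To see it, take `B₂ ∈ ℬ_x` above `B` and above the tree `B_W`
witnessing `W`. By the defining property of `≤*`, `Y'` is an almost front of `B₂`, and so is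
`Y ∩ B'_W`, where `B'_W` is the exhaustive subtree of `B_W` with `B'_W ∩ Y ⊆ W`. The exhaustive
subtree of `B₂` on which `Y ∩ B'_W` is a front then witnesses `Z ∈ D^x_{Y'}`.
-/

section Chains

variable [PartialOrder α] {C : Set α}

theorem IsChain.exists_forall_le_of_finite (hch : IsChain (· ≤ ·) C) (hfin : C.Finite)
    (hne : C.Nonempty) : ∃ m ∈ C, ∀ z ∈ C, z ≤ m := by
  obtain ⟨m, hm⟩ := hfin.exists_maximal hne
  exact ⟨m, hm.prop, fun z hz => hch.le_of_not_gt hm.prop hz (hm.not_gt hz)⟩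

theorem IsChain.exists_forall_ge_of_finite (hch : IsChain (· ≤ ·) C) (hfin : C.Finite)
    (hne : C.Nonempty) : ∃ m ∈ C, ∀ z ∈ C, m ≤ z := by
  obtain ⟨m, hm⟩ := hfin.exists_minimal hne
  exact ⟨m, hm.prop, fun z hz => hch.le_of_not_gt hz hm.prop (hm.not_lt hz)⟩

end Chains

section Trees

variable [PartialOrder α] {M B D E P Y : Set α} {ν ρ : α}

theorem IsRoot.unique {r r' : α} (h : IsRoot B r) (h' : IsRoot B r') : r = r' :=
  le_antisymm (h.2 r' h'.1) (h'.2 r h.1)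

theorem succIn_inter_subset (hD : D ⊆ B) : succIn B ν ∩ D ⊆ succIn D ν :=
  fun _ ⟨⟨_, hlt, hno⟩, hρD⟩ =>
    ⟨hρD, hlt, fun ⟨σ, hσ, h1, h2⟩ => hno ⟨σ, hD hσ, h1, h2⟩⟩

theorem succIn_eq_empty_of_mem_maxIn (hρ : ρ ∈ maxIn B) : succIn B ρ = ∅ :=
  Set.eq_empty_iff_forall_notMem.mpr fun σ hσ => hρ.2 σ hσ.1 hσ.2.1

theorem CWT.le_total_of_le (hc : CWT M B) (hν : ν ∈ B) {a b : α} (ha : a ∈ B) (hb : b ∈ B)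
    (haν : a ≤ ν) (hbν : b ≤ ν) : a ≤ b ∨ b ≤ a :=
  hc.2.2.2.1 ν hν a ha b hb haν hbν

theorem CWT.finite_of_isChain (hc : CWT M B) {C : Set α} (hC : C ⊆ B)
    (hch : IsChain (· ≤ ·) C) : C.Finite :=
  hc.2.2.2.2.1 C hC hch

theorem CWT.isChain_of_subset_le (hc : CWT M B) (hν : ν ∈ B) {C : Set α}
    (hC : ∀ σ ∈ C, σ ∈ B ∧ σ ≤ ν) : IsChain (· ≤ ·) C :=
  fun a ha b hb _ => hc.le_total_of_le hν (hC a ha).1 (hC b hb).1 (hC a ha).2 (hC b hb).2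

theorem CWT.mem_maxIn_of_succIn_eq_empty (hc : CWT M B) (hρ : ρ ∈ B)
    (hemp : succIn B ρ = ∅) : ρ ∈ maxIn B := by
  refine ⟨hρ, fun σ hσ hρσ => ?_⟩
  have hch := hc.isChain_of_subset_le (C := {τ ∈ B | ρ < τ ∧ τ ≤ σ}) hσ
    fun τ hτ => ⟨hτ.1, hτ.2.2⟩
  obtain ⟨τ, ⟨hτB, hρτ, -⟩, hτmin⟩ := hch.exists_forall_ge_of_finite
    (hc.finite_of_isChain (fun τ hτ => hτ.1) hch) ⟨σ, hσ, hρσ, le_rfl⟩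
  have hsucc : τ ∈ succIn B ρ := ⟨hτB, hρτ, fun ⟨ϱ, hϱB, hρϱ, hϱτ⟩ =>
    (hτmin ϱ ⟨hϱB, hρϱ, hϱτ.le.trans (hτmin σ ⟨hσ, hρσ, le_rfl⟩)⟩).not_gt hϱτ⟩
  rwa [hemp] at hsucc

theorem CWT.exists_le_mem_maxIn (hc : CWT M B) (hν : ν ∈ B) : ∃ ρ ∈ maxIn B, ν ≤ ρ := by
  obtain ⟨m, hνm, hmax⟩ := zorn_le_nonempty₀ {σ ∈ B | ν ≤ σ} (fun C hC hch y hy => by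
    obtain ⟨m, hm, hub⟩ := hch.exists_forall_le_of_finite
      (hc.finite_of_isChain (fun z hz => (hC hz).1) hch) ⟨y, hy⟩
    exact ⟨m, hC hm, hub⟩) ν ⟨hν, le_rfl⟩
  exact ⟨m, ⟨hmax.1.1, fun σ hσ hlt => hmax.not_gt ⟨hσ, hνm.trans hlt.le⟩ hlt⟩, hνm⟩

theorem IsFront.eq_of_le (hY : IsFront B Y) {a b : α} (ha : a ∈ Y) (hb : b ∈ Y) (hab : a ≤ b) :
    a = b :=
  by_contra fun hne => hY.2.1 a ha b hb hne hab

theorem IsFront.eq_of_le_of_comparable (hc : CWT M B) (hY : IsFront B Y) (hν : ν ∈ B)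
    {a b : α} (ha : a ∈ Y) (hb : b ∈ Y) (haν : a ≤ ν) (hbν : b ≤ ν ∨ ν ≤ b) : a = b := by
  rcases hbν with hbν | hνb
  · rcases hc.le_total_of_le hν (hY.1 ha) (hY.1 hb) haν hbν with hab | hba
    · exact hY.eq_of_le ha hb hab
    · exact (hY.eq_of_le hb ha hba).symm
  · exact hY.eq_of_le ha hb (haν.trans hνb)

theorem sb_refl (hc : CWT M B) : sb M B B := by
  obtain ⟨r, hr⟩ := hc.2.2.1
  exact ⟨hc, subset_rfl, ⟨r, hr, hr⟩,
    fun _ _ => ⟨subset_rfl, by simp only [sdiff_self, finite_empty]⟩⟩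

theorem sb_trans (hP : sb M B P) (hE : sb M P E) : sb M B E := by
  refine ⟨hE.1, hE.2.1.trans hP.2.1, ?_, fun ν hν => ?_⟩
  · obtain ⟨r, hrB, hrP⟩ := hP.2.2.1
    obtain ⟨r', hrP', hrE⟩ := hE.2.2.1
    obtain rfl := hrP.unique hrP'
    exact ⟨r, hrB, hrE⟩
  · obtain ⟨hPsub, hPfin⟩ := hP.2.2.2 ν (hE.2.1 hν)
    obtain ⟨hEsub, hEfin⟩ := hE.2.2.2 ν hν
    refine ⟨hEsub.trans hPsub, (hPfin.union hEfin).subset fun ρ hρ => ?_⟩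
    by_cases hρP : ρ ∈ succIn P ν
    · exact Or.inr ⟨hρP, hρ.2⟩
    · exact Or.inl ⟨hρ.1, hρP⟩

theorem IsFront.isAlmostFront (hc : CWT M B) (hY : IsFront B Y) : IsAlmostFront M B Y :=
  ⟨fun _ hy => hc.1 (hY.1 hy), hY.2.1, B, sb_refl hc, by rwa [inter_eq_left.mpr hY.1]⟩

end Trees

section FullSubtree

variable [PartialOrder α] {M B D E F P Y : Set α} {μ ν ρ : α}

/-- The common part of `sb` and `psb`, which is what makes fronts of `B` restrict to `B'`. -/
structure IsFullSubtree (M B B' : Set α) : Prop where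
  cwt : CWT M B
  cwt' : CWT M B'
  sub : B' ⊆ B
  root : ∃ r, IsRoot B r ∧ IsRoot B' r
  succ_sub : ∀ ν ∈ B', succIn B' ν ⊆ succIn B ν
  max_mem : ∀ ρ ∈ B', succIn B' ρ = ∅ → ρ ∈ maxIn B

namespace IsFullSubtree

theorem of_sb (hc : CWT M B) (hs : sb M B D) : IsFullSubtree M B D where
  cwt := hc
  cwt' := hs.1
  sub := hs.2.1
  root := hs.2.2.1
  succ_sub ν hν := (hs.2.2.2 ν hν).1
  max_mem ρ hρ hemp := by
    have hfin := (hs.2.2.2 ρ hρ).2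
    rw [hemp, sdiff_empty] at hfin
    refine hc.mem_maxIn_of_succIn_eq_empty (hs.2.1 hρ) ?_
    exact (hc.2.2.2.2.2.1 ρ (hs.2.1 hρ)).resolve_right (not_not.mpr hfin)

theorem of_psb (hc : CWT M B) (hp : psb M B D) : IsFullSubtree M B D where
  cwt := hc
  cwt' := hp.1
  sub := hp.2.1
  root := hp.2.2.1
  succ_sub ν hν := by
    by_cases hm : ν ∈ maxIn B
    · exact fun ρ hρ => absurd hρ.2.1 (hm.2 ρ (hp.2.1 hρ.1))
    · exact (hp.2.2.2 ν ⟨hν, hm⟩).2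
  max_mem ρ hρ hemp := by_contra fun hm => (hp.2.2.2 ρ ⟨hρ, hm⟩).1 (hemp ▸ finite_empty)

theorem trans (hP : IsFullSubtree M B P) (hE : IsFullSubtree M P E) : IsFullSubtree M B E where
  cwt := hP.cwt
  cwt' := hE.cwt'
  sub := hE.sub.trans hP.sub
  root := by
    obtain ⟨r, hrB, hrP⟩ := hP.root
    obtain ⟨r', hrP', hrE⟩ := hE.root
    obtain rfl := hrP.unique hrP'
    exact ⟨r, hrB, hrE⟩
  succ_sub ν hν := (hE.succ_sub ν hν).trans (hP.succ_sub ν (hE.sub hν))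
  max_mem ρ hρ hemp :=
    hP.max_mem ρ (hE.sub hρ) (succIn_eq_empty_of_mem_maxIn (hE.max_mem ρ hρ hemp))

theorem of_subset (hF : IsFullSubtree M B F) (hE : IsFullSubtree M B E) (hEF : E ⊆ F) :
    IsFullSubtree M F E where
  cwt := hF.cwt'
  cwt' := hE.cwt'
  sub := hEF
  root := by
    obtain ⟨r, hrB, hrF⟩ := hF.root
    obtain ⟨r', hrB', hrE⟩ := hE.root
    obtain rfl := hrB.unique hrB'
    exact ⟨r, hrF, hrE⟩
  succ_sub ν hν ρ hρ := succIn_inter_subset hF.sub ⟨hE.succ_sub ν hν hρ, hEF hρ.1⟩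
  max_mem ρ hρ hemp := ⟨hEF hρ, fun σ hσ => (hE.max_mem ρ hρ hemp).2 σ (hF.sub hσ)⟩

/-- The last element of `D` below `μ` on the way to `ν` would have a `D`-successor that is not
a `B`-successor. -/
theorem mem_of_le (hD : IsFullSubtree M B D) (hμ : μ ∈ B) (hν : ν ∈ D) (hμν : μ ≤ ν) :
    μ ∈ D := by
  obtain ⟨r, hrB, hrD⟩ := hD.root
  have hS := hD.cwt'.isChain_of_subset_le (C := {σ ∈ D | σ ≤ ν ∧ μ ≤ σ}) hν
    fun σ hσ => ⟨hσ.1, hσ.2.1⟩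
  obtain ⟨τ, ⟨hτD, hτν, hμτ⟩, hτmin⟩ := hS.exists_forall_ge_of_finite
    (hD.cwt'.finite_of_isChain (fun σ hσ => hσ.1) hS) ⟨ν, hν, le_rfl, hμν⟩
  rcases hμτ.eq_or_lt with rfl | hμτ
  · exact hτD
  have hP := hD.cwt'.isChain_of_subset_le (C := {σ ∈ D | σ < τ}) hτD
    fun σ hσ => ⟨hσ.1, hσ.2.le⟩
  obtain ⟨σ, ⟨hσD, hστ⟩, hσmax⟩ := hP.exists_forall_le_of_finite
    (hD.cwt'.finite_of_isChain (fun σ hσ => hσ.1) hP) ⟨r, hrD.1, (hrB.2 μ hμ).trans_lt hμτ⟩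
  have hsucc : τ ∈ succIn B σ := hD.succ_sub σ hσD
    ⟨hτD, hστ, fun ⟨ϱ, hϱ, hσϱ, hϱτ⟩ => (hσmax ϱ ⟨hϱ, hϱτ⟩).not_gt hσϱ⟩
  rcases hD.cwt.le_total_of_le (hD.sub hτD) (hD.sub hσD) hμ hστ.le hμτ.le with hσμ | hμσ
  · rcases hσμ.eq_or_lt with rfl | hσμ
    · exact hσD
    · exact absurd ⟨μ, hμ, hσμ, hμτ⟩ hsucc.2.2
  · exact absurd (hτmin σ ⟨hσD, hστ.le.trans hτν, hμσ⟩) hστ.not_ge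

theorem isFront_inter (hD : IsFullSubtree M B D) (hY : IsFront B Y) : IsFront D (Y ∩ D) := by
  refine ⟨inter_subset_right, fun η hη ν hν => hY.2.1 η hη.1 ν hν.1, fun ν hν => ?_⟩
  obtain ⟨ρ, hρmax, hνρ⟩ := hD.cwt'.exists_le_mem_maxIn hν
  have hρB := hD.max_mem ρ hρmax.1 (succIn_eq_empty_of_mem_maxIn hρmax)
  obtain ⟨η, hηY, hcomp⟩ := hY.2.2 ρ (hD.sub hρmax.1)
  have hηρ : η ≤ ρ := hcomp.elim id fun hρη => (hρη.eq_of_not_lt (hρB.2 η (hY.1 hηY))).ge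
  exact ⟨η, ⟨hηY, hD.mem_of_le (hY.1 hηY) hρmax.1 hηρ⟩,
    hD.cwt.le_total_of_le (hD.sub hρmax.1) (hY.1 hηY) (hD.sub hν) hηρ hνρ⟩

theorem succIn_inter_eq (hD : IsFullSubtree M B D) (hP : P ⊆ B) :
    succIn (D ∩ P) ν = succIn P ν ∩ D := by
  refine subset_antisymm (fun ρ ⟨hρ, hνρ, hno⟩ => ⟨⟨hρ.2, hνρ, ?_⟩, hρ.1⟩)
    fun ρ hρ => succIn_inter_subset inter_subset_right ⟨hρ.1, hρ.2, hρ.1.1⟩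
  exact fun ⟨σ, hσ, hνσ, hσρ⟩ => hno ⟨σ, ⟨hD.mem_of_le (hP hσ) hρ.1 hσρ.le, hσ⟩, hνσ, hσρ⟩

theorem finite_succIn_sdiff_inter (hP : IsFullSubtree M B P) (hd : sb M B D)
    (hν : ν ∈ D ∩ P) : (succIn P ν \ succIn (D ∩ P) ν).Finite := by
  rw [(of_sb hP.cwt hd).succIn_inter_eq hP.sub]
  exact (hd.2.2.2 ν hν.1).2.subset fun ρ ⟨hρP, hρ⟩ =>
    ⟨hP.succ_sub ν hν.2 hρP, fun hρD => hρ ⟨hρP, hρD.1⟩⟩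

theorem exists_isRoot_inter (hP : IsFullSubtree M B P) (hd : sb M B D) :
    ∃ r, IsRoot P r ∧ IsRoot (D ∩ P) r := by
  obtain ⟨r, hrB, hrD⟩ := hd.2.2.1
  obtain ⟨r', hrB', hrP⟩ := hP.root
  obtain rfl := hrB.unique hrB'
  exact ⟨r, hrP, ⟨hrD.1, hrP.1⟩, fun y hy => hrD.2 y hy.1⟩

theorem cwt_inter (hP : IsFullSubtree M B P) (hd : sb M B D) : CWT M (D ∩ P) := by
  have hsucc : ∀ ν, succIn (D ∩ P) ν = succIn P ν ∩ D := fun _ =>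
    (of_sb hP.cwt hd).succIn_inter_eq hP.sub
  have hbig : ∀ ν ∈ D ∩ P, ∀ S ⊆ succIn P ν, S.Infinite → (S ∩ succIn (D ∩ P) ν).Infinite :=
    fun ν hν S hS hinf => by
      refine (hinf.sdiff (hP.finite_succIn_sdiff_inter hd hν)).mono ?_
      exact fun ϱ ⟨hϱS, hϱ⟩ => ⟨hϱS, by_contra fun h => hϱ ⟨hS hϱS, h⟩⟩
  obtain ⟨r, -, hr⟩ := hP.exists_isRoot_inter hd
  refine ⟨fun _ hy => hP.cwt'.1 hy.2, hd.1.2.1.mono inter_subset_left, ⟨r, hr⟩,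
    fun ν hν η hη ρ hρ => hd.1.2.2.2.1 ν hν.1 η hη.1 ρ hρ.1,
    fun C hC => hd.1.2.2.2.2.1 C (hC.trans inter_subset_left), fun ν hν => ?_,
    fun η hη ν hν => hd.1.2.2.2.2.2.2.1 η hη.1 ν hν.1, fun ν hν F hF => ?_⟩
  · rcases hP.cwt'.2.2.2.2.2.1 ν hν.2 with hemp | hinf
    · exact Or.inl (by rw [hsucc, hemp, empty_inter])
    · exact Or.inr ((hbig ν hν _ subset_rfl hinf).mono inter_subset_right)
  · obtain ⟨σ, hσ, hνσ⟩ : ∃ σ ∈ D ∩ P, ν < σ := by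
      by_contra! h
      exact hν.2 (show ν ∈ maxIn (D ∩ P) from ⟨hν.1, h⟩)
    have hS := hP.cwt'.2.2.2.2.2.2.2 ν ⟨hν.1.2, fun hm => hm.2 σ hσ.2 hνσ⟩ F hF
    refine (hbig ν hν.1 _ (sep_subset _ _) hS).mono ?_
    exact fun ϱ ⟨⟨_, hϱF⟩, hϱ⟩ => ⟨hϱ, hϱF⟩

theorem sb_inter (hP : IsFullSubtree M B P) (hd : sb M B D) : sb M P (D ∩ P) :=
  ⟨hP.cwt_inter hd, inter_subset_right, hP.exists_isRoot_inter hd, fun _ hν =>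
    ⟨(of_sb hP.cwt hd).succIn_inter_eq hP.sub ▸ inter_subset_left,
      hP.finite_succIn_sdiff_inter hd hν⟩⟩

end IsFullSubtree

end FullSubtree

section AlmostFront

variable [PartialOrder α] {M B B' B₂ Y : Set α}

/-- `E = F ∩ B' ∩ (C ∩ B)` is an exhaustive subtree of the positive subtree `C ∩ B` given by `≤*`,
lies inside `B'`, and still meets `Y` in a front, so `≤*` transfers `Y ∩ B'` to `B₂`. -/
theorem IsAlmostFront.inter_of_leStar (hY : IsAlmostFront M B Y) (hle : leStar M B B₂)
    (hB' : sb M B B') : IsAlmostFront M B₂ (Y ∩ B') := by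
  obtain ⟨hc, -, -, C, -, hpsb, htransfer⟩ := hle
  obtain ⟨hYM, hYanti, F, hF, hYF⟩ := hY
  have hP := IsFullSubtree.of_psb hc hpsb
  have hFB' : sb M B (F ∩ B') := sb_trans hB' ((IsFullSubtree.of_sb hc hB').sb_inter hF)
  set E := F ∩ B' ∩ (C ∩ B)
  have hEF' : E ⊆ F := fun _ h => h.1.1
  have hEB' : E ⊆ B' := fun _ h => h.1.2
  have hE : sb M (C ∩ B) E := hP.sb_inter hFB'
  have hEF : IsFullSubtree M F E := (IsFullSubtree.of_sb hc hF).of_subset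
    (hP.trans (IsFullSubtree.of_sb hP.cwt' hE)) hEF'
  refine htransfer _ ⟨fun _ h => hYM h.1, fun η hη ν hν => hYanti η hη.1 ν hν.1, E, hE, ?_⟩
  have hYE : Y ∩ B' ∩ E = Y ∩ F ∩ E := by
    rw [inter_assoc, inter_eq_right.mpr hEB', inter_assoc, inter_eq_right.mpr hEF']
  exact hYE ▸ hEF.isFront_inter hYF

theorem IsFront.isAlmostFront_of_leStar (hY : IsFront B Y) (hle : leStar M B B₂) :
    IsAlmostFront M B₂ Y := by
  have hc : CWT M B := hle.1
  simpa only [inter_eq_left.mpr hY.1] using (hY.isAlmostFront hc).inter_of_leStar hle (sb_refl hc)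

end AlmostFront

namespace KSys

variable [PartialOrder α] {B Y Y' W Z : Set α}

theorem mem_D_of_forall_comparable (x : KSys α) (hB : B ∈ x.Bf) (hY' : IsFront B Y')
    (hZ : Z ⊆ Y') (hW : W ∈ x.D Y) (hcomp : ∀ ν ∈ Y', ∀ w ∈ W, (w ≤ ν ∨ ν ≤ w) → ν ∈ Z) :
    Z ∈ x.D Y' := by
  obtain ⟨-, B₁, hB₁, B₁', hB₁', hY, hWsub⟩ := hW
  obtain ⟨B₂, hB₂, hBB₂, hB₁B₂⟩ := x.lex_directed B hB B₁ hB₁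
  obtain ⟨-, -, G, hG, hfront⟩ := hY.inter_of_leStar (x.lex_leStar _ _ hB₁B₂) hB₁'
  refine ⟨hZ, B₂, hB₂, G, hG, hY'.isAlmostFront_of_leStar (x.lex_leStar _ _ hBB₂),
    fun ν ⟨hνG, hνY'⟩ => ?_⟩
  obtain ⟨w, ⟨⟨hwY, hwB₁'⟩, -⟩, hw⟩ := hfront.2.2 ν hνG
  exact hcomp ν hνY' w (hWsub ⟨hwB₁', hwY⟩) hw

end KSys

theorem D_projection_RK_general [PartialOrder α] (x : KSys α) (B : Set α) (hB : B ∈ x.Bf)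
    (Y₁ Y₂ : Set α) (hY₁ : IsFront B Y₁) (hY₂ : IsFront B Y₂)
    (h : α → α) (hproj : ∀ ν₂ ∈ Y₂, h ν₂ ∈ Y₁ ∧ h ν₂ ≤ ν₂) :
    x.D Y₁ = {A | A ⊆ Y₁ ∧ {ν ∈ Y₂ | h ν ∈ A} ∈ x.D Y₂} := by
  have hcB : CWT x.M B := x.A_cwt x.rt x.rt_mem B hB.1
  have hproj_eq : ∀ ν ∈ Y₂, ∀ y ∈ Y₁, (y ≤ ν ∨ ν ≤ y) → h ν = y := fun ν hν y hy hyν =>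
    hY₁.eq_of_le_of_comparable hcB (hY₂.1 hν) (hproj ν hν).1 hy (hproj ν hν).2 hyν
  ext A
  constructor
  · intro hA
    refine ⟨hA.1, x.mem_D_of_forall_comparable hB hY₂ (sep_subset _ _) hA ?_⟩
    exact fun ν hν y hy hyν => ⟨hν, hproj_eq ν hν y (hA.1 hy) hyν ▸ hy⟩
  · rintro ⟨hAY₁, hpre⟩
    refine x.mem_D_of_forall_comparable hB hY₁ hAY₁ hpre ?_
    exact fun μ hμ ν hν hμν => hproj_eq ν hν.1 μ hμ hμν.symm ▸ hν.2

/-- if `Y₁, Y₂` are fronts of `B ∈ ℬ_x` with `Y₂` above `Y₁` and `h` is the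
projection from `Y₂` to `Y₁`, then `D^x_{Y₁} = {A ⊆ Y₁ : h⁻¹[A] ∈ D^x_{Y₂}}`, i.e. `h`
witnesses `D^x_{Y₁} ≤_RK D^x_{Y₂}`. -/
theorem D_projection_RK [PartialOrder α] (x : KSys α) (B : Set α) (hB : B ∈ x.Bf)
    (Y₁ Y₂ : Set α) (hY₁ : IsFront B Y₁) (hY₂ : IsFront B Y₂)
    (habove : ∀ η ∈ Y₂, ∃ ν ∈ Y₁, ν ≤ η)
    (h : α → α) (hproj : ∀ ν₂ ∈ Y₂, h ν₂ ∈ Y₁ ∧ h ν₂ ≤ ν₂) :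
    x.D Y₁ = {A | A ⊆ Y₁ ∧ {ν ∈ Y₂ | h ν ∈ A} ∈ x.D Y₂} :=
  D_projection_RK_general x B hB Y₁ Y₂ hY₁ hY₂ h hproj
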